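/- arXiv:1504.00253 — 5 statements merged into one kernel-verified Lean document; each statement's English description precedes it below -/
import Mathlib

section
/- Welch bound: Let M and N be positive integers with N ≥ M and N ≥ 2, and let φ_1, …, φ_N be unit vectors in ℂ^M. Then the worst-case coherence satisfies μ(Φ) := max_{i≠j} |⟨φ_i, φ_j⟩| ≥ √((N−M)/(M(N−1))). -/
/-!
Write the vectors as the columns of a `d × N` coefficient matrix `B` (with respect to an
orthonormal basis), so that their Gram matrix is `Bᴴ B`. The `N × N` matrix `Bᴴ B` and the
`d × d` matrix `B Bᴴ` have the same trace `∑ ‖φ i‖² = N` and the same Frobenius norm, and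
Cauchy–Schwarz on the `d` diagonal entries of `B Bᴴ` gives `N² ≤ d ∑ |⟪φ i, φ j⟫|²`.
The diagonal contributes exactly `N` to this frame potential, and each of the `N (N - 1)`
off-diagonal terms is at most `μ²`.
-/

open scoped InnerProductSpace

open Finset RCLike

namespace Matrix

variable {𝕜 m n : Type*} [RCLike 𝕜] [Fintype m] [Fintype n]

theorem sum_norm_sq_eq_re_trace_conjTranspose_mul (A : Matrix m n 𝕜) :
    ∑ i, ∑ j, ‖A i j‖ ^ 2 = re (Aᴴ * A).trace := by
  simp only [trace, diag, mul_apply, conjTranspose_apply, map_sum, RCLike.star_def,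
    RCLike.conj_mul, ← ofReal_pow, ofReal_re]
  exact sum_comm

theorem sum_norm_sq_conjTranspose_mul_eq (A : Matrix m n 𝕜) :
    ∑ i, ∑ j, ‖(Aᴴ * A) i j‖ ^ 2 = ∑ k, ∑ l, ‖(A * Aᴴ) k l‖ ^ 2 := by
  rw [sum_norm_sq_eq_re_trace_conjTranspose_mul, sum_norm_sq_eq_re_trace_conjTranspose_mul,
    (isHermitian_conjTranspose_mul_self A).eq, (isHermitian_mul_conjTranspose_self A).eq,
    Matrix.mul_assoc, trace_mul_comm, Matrix.mul_assoc, Matrix.mul_assoc,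
    Matrix.mul_assoc]

theorem sq_re_trace_le_card_mul_sum_norm_sq (H : Matrix n n 𝕜) :
    re H.trace ^ 2 ≤ Fintype.card n * ∑ k, ∑ l, ‖H k l‖ ^ 2 := calc
  re H.trace ^ 2 = (∑ k, re (H k k)) ^ 2 := by simp [trace]
  _ ≤ Fintype.card n * ∑ k, re (H k k) ^ 2 := sq_sum_le_card_mul_sum_sq
  _ ≤ Fintype.card n * ∑ k, ∑ l, ‖H k l‖ ^ 2 := by
    gcongr with k
    calc re (H k k) ^ 2 ≤ ‖H k k‖ ^ 2 := by
          rw [sq_le_sq, abs_norm]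
          exact abs_re_le_norm _
      _ ≤ ∑ l, ‖H k l‖ ^ 2 :=
          single_le_sum (f := fun l => ‖H k l‖ ^ 2) (fun l _ => by positivity) (mem_univ k)

theorem sq_re_trace_conjTranspose_mul_le (A : Matrix m n 𝕜) :
    re (Aᴴ * A).trace ^ 2 ≤ Fintype.card m * ∑ i, ∑ j, ‖(Aᴴ * A) i j‖ ^ 2 := by
  rw [trace_mul_comm, sum_norm_sq_conjTranspose_mul_eq]
  exact sq_re_trace_le_card_mul_sum_norm_sq _

end Matrix

section FramePotential

open Matrix

variable {𝕜 E ι κ : Type*} [RCLike 𝕜] [NormedAddCommGroup E] [InnerProductSpace 𝕜 E]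

theorem OrthonormalBasis.gram_eq_conjTranspose_mul [Fintype κ] (b : OrthonormalBasis κ 𝕜 E)
    (v : ι → E) :
    gram 𝕜 v = (of fun k i => ⟪b k, v i⟫_𝕜)ᴴ * of fun k i => ⟪b k, v i⟫_𝕜 := by
  ext i j
  simp [mul_apply, b.sum_inner_mul_inner]

variable (𝕜) in
theorem sq_sum_norm_sq_le_finrank_mul_sum_norm_inner_sq [FiniteDimensional 𝕜 E] [Fintype ι]
    (v : ι → E) :
    (∑ i, ‖v i‖ ^ 2) ^ 2 ≤ Module.finrank 𝕜 E * ∑ i, ∑ j, ‖⟪v i, v j⟫_𝕜‖ ^ 2 := by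
  have h := sq_re_trace_conjTranspose_mul_le
    (of fun k i => ⟪stdOrthonormalBasis 𝕜 E k, v i⟫_𝕜)
  rw [← OrthonormalBasis.gram_eq_conjTranspose_mul] at h
  simpa [trace, inner_self_eq_norm_sq] using h

variable (𝕜) in
theorem card_mul_sub_finrank_le_finrank_mul_sum_offDiag [FiniteDimensional 𝕜 E] [Fintype ι]
    (v : ι → E) (hv : ∀ i, ‖v i‖ = 1) :
    (Fintype.card ι : ℝ) * (Fintype.card ι - Module.finrank 𝕜 E) ≤
      Module.finrank 𝕜 E * ∑ p ∈ univ.offDiag, ‖⟪v p.1, v p.2⟫_𝕜‖ ^ 2 := by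
  classical
  have hpot := sq_sum_norm_sq_le_finrank_mul_sum_norm_inner_sq 𝕜 v
  have hdiag : ∑ i, ‖⟪v i, v i⟫_𝕜‖ ^ 2 = Fintype.card ι := by
    simp [inner_self_eq_norm_sq_to_K, hv]
  have hsplit : ∑ i, ∑ j, ‖⟪v i, v j⟫_𝕜‖ ^ 2 =
      Fintype.card ι + ∑ p ∈ univ.offDiag, ‖⟪v p.1, v p.2⟫_𝕜‖ ^ 2 := by
    rw [← hdiag, ← sum_product', ← diag_union_offDiag, sum_union (disjoint_diag_offDiag _),
      sum_diag]
  simp only [hv, one_pow, sum_const, card_univ, nsmul_eq_mul, mul_one, hsplit] at hpot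
  linarith

end FramePotential

section Coherence

variable (𝕜 : Type*) {E ι : Type*} [RCLike 𝕜] [NormedAddCommGroup E] [InnerProductSpace 𝕜 E]

noncomputable def coherence (v : ι → E) : ℝ :=
  ⨆ p : {p : ι × ι // p.1 ≠ p.2}, ‖⟪v p.val.1, v p.val.2⟫_𝕜‖

variable {𝕜}

theorem coherence_nonneg (v : ι → E) : 0 ≤ coherence 𝕜 v :=
  Real.iSup_nonneg fun _ => norm_nonneg _

theorem norm_inner_le_coherence [Finite ι] (v : ι → E) {i j : ι} (hij : i ≠ j) :
    ‖⟪v i, v j⟫_𝕜‖ ≤ coherence 𝕜 v :=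
  le_ciSup (f := fun p : {p : ι × ι // p.1 ≠ p.2} => ‖⟪v p.val.1, v p.val.2⟫_𝕜‖)
    (Set.finite_range _).bddAbove ⟨(i, j), hij⟩

theorem sum_offDiag_norm_inner_sq_le [Fintype ι] (v : ι → E) :
    ∑ p ∈ univ.offDiag, ‖⟪v p.1, v p.2⟫_𝕜‖ ^ 2 ≤
      Fintype.card ι * (Fintype.card ι - 1) * coherence 𝕜 v ^ 2 := by
  have hcard : ((univ : Finset ι).offDiag.card : ℝ) = Fintype.card ι * (Fintype.card ι - 1) := by
    rw [offDiag_card, card_univ, Nat.cast_sub (Nat.le_mul_self _)]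
    push_cast
    ring
  rw [← hcard, ← nsmul_eq_mul]
  refine sum_le_card_nsmul _ _ _ fun p hp => ?_
  gcongr
  exact norm_inner_le_coherence v (mem_offDiag.mp hp).2.2

theorem div_le_coherence_sq [FiniteDimensional 𝕜 E] [Fintype ι] [Nonempty ι] (v : ι → E)
    (hv : ∀ i, ‖v i‖ = 1) :
    ((Fintype.card ι : ℝ) - Module.finrank 𝕜 E) /
        (Module.finrank 𝕜 E * ((Fintype.card ι : ℝ) - 1)) ≤ coherence 𝕜 v ^ 2 := by
  have hN : (1 : ℝ) ≤ Fintype.card ι := by exact_mod_cast Fintype.card_pos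
  have hoff := sum_offDiag_norm_inner_sq_le (𝕜 := 𝕜) v
  have hpot := card_mul_sub_finrank_le_finrank_mul_sum_offDiag 𝕜 v hv
  refine div_le_of_le_mul₀ (mul_nonneg (Nat.cast_nonneg _) (by linarith)) (sq_nonneg _) ?_
  nlinarith

end Coherence

theorem welch_bound_general (M N : ℕ) (hN : 2 ≤ N)
    (φ : Fin N → EuclideanSpace ℂ (Fin M)) (hunit : ∀ i, ‖φ i‖ = 1) :
    Real.sqrt (((N : ℝ) - M) / (M * ((N : ℝ) - 1))) ≤
      ⨆ p : {p : Fin N × Fin N // p.1 ≠ p.2}, ‖⟪φ p.val.1, φ p.val.2⟫_ℂ‖ := by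
  have : Nonempty (Fin N) := ⟨⟨0, by omega⟩⟩
  change _ ≤ coherence ℂ φ
  rw [Real.sqrt_le_left (coherence_nonneg φ)]
  simpa using div_le_coherence_sq (𝕜 := ℂ) φ hunit

/-- **Welch bound.** For unit vectors `φ 1, …, φ N` in `ℂ^M` (with `M ≤ N`, `2 ≤ N`),
the worst-case coherence `max_{i ≠ j} |⟨φ i, φ j⟩|` is at least
`√((N − M) / (M (N − 1)))`. -/
theorem welch_bound (M N : ℕ) (hM : 1 ≤ M) (hMN : M ≤ N) (hN : 2 ≤ N)
    (φ : Fin N → EuclideanSpace ℂ (Fin M)) (hunit : ∀ i, ‖φ i‖ = 1) :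
    Real.sqrt (((N : ℝ) - M) / (M * ((N : ℝ) - 1))) ≤
      ⨆ p : {p : Fin N × Fin N // p.1 ≠ p.2}, ‖⟪φ p.val.1, φ p.val.2⟫_ℂ‖ :=
  welch_bound_general M N hN φ hunit
end

section
/- Naimark complement (real case): Let M and N be positive integers with M < N. If there exists a real equiangular tight frame of N vectors in ℝ^M, then there exists a real equiangular tight frame of N vectors in ℝ^{N−M}. -/
open scoped InnerProductSpace

/-- A real equiangular tight frame of `N` unit vectors in `ℝ^M`. -/
def IsRealETF (M N : ℕ) (φ : Fin N → EuclideanSpace ℝ (Fin M)) : Prop :=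
  (∀ i, ‖φ i‖ = 1) ∧
  (∃ c : ℝ, ∀ i j, i ≠ j → |⟪φ i, φ j⟫_ℝ| = c) ∧
  (∀ x : EuclideanSpace ℝ (Fin M),
    ∑ n, ⟪x, φ n⟫_ℝ • φ n = ((N : ℝ) / (M : ℝ)) • x)

/-!
For unit vectors `φ n ∈ ℝ^M`, the tight-frame identity says exactly that the `M` rows of the
matrix with columns `φ n` are orthogonal of squared norm `N / M`. Rescaled, they form an
orthonormal family in `ℝ^N`; completing it to an orthonormal basis adds `N - M` further rows, and
since the columns of an orthogonal matrix are orthonormal as well, the columns `ψ n` of the added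
block have Gram matrix `I - (M / N) (⟪φ i, φ j⟫)`. After rescaling by `√(N / (N - M))` they are
unit vectors whose mutual inner products are `-M / (N - M)` times those of the `φ n`, and their
rows are orthogonal of squared norm `N / (N - M)`, which is the tight-frame identity again.
-/

section transposeFamily

variable {ι κ : Type*}

def transposeFamily (v : ι → EuclideanSpace ℝ κ) : κ → EuclideanSpace ℝ ι :=
  fun k => WithLp.toLp 2 fun i => v i k

@[simp]
lemma transposeFamily_apply (v : ι → EuclideanSpace ℝ κ) (k : κ) (i : ι) :
    transposeFamily v k i = v i k :=
  rfl

@[simp]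
lemma transposeFamily_transposeFamily (v : ι → EuclideanSpace ℝ κ) :
    transposeFamily (transposeFamily v) = v :=
  rfl

lemma transposeFamily_smul (c : ℝ) (v : ι → EuclideanSpace ℝ κ) :
    transposeFamily (c • v) = c • transposeFamily v :=
  rfl

lemma inner_transposeFamily [Fintype ι] (v : ι → EuclideanSpace ℝ κ) (k l : κ) :
    ⟪transposeFamily v k, transposeFamily v l⟫_ℝ = ∑ i, v i k * v i l := by
  simp [PiLp.inner_apply, mul_comm]

lemma inner_transposeFamily_sumElim [Fintype ι] {ι' : Type*} [Fintype ι']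
    (u : ι → EuclideanSpace ℝ κ) (w : ι' → EuclideanSpace ℝ κ) (k l : κ) :
    ⟪transposeFamily (Sum.elim u w) k, transposeFamily (Sum.elim u w) l⟫_ℝ =
      ⟪transposeFamily u k, transposeFamily u l⟫_ℝ +
        ⟪transposeFamily w k, transposeFamily w l⟫_ℝ := by
  simp only [inner_transposeFamily, Fintype.sum_sum_type, Sum.elim_inl, Sum.elim_inr]

lemma sum_inner_smul_apply [Fintype ι] [Fintype κ] (v : ι → EuclideanSpace ℝ κ)
    (x : EuclideanSpace ℝ κ) (l : κ) :
    (∑ i, ⟪x, v i⟫_ℝ • v i) l = ∑ k, x k * ⟪transposeFamily v k, transposeFamily v l⟫_ℝ := by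
  simp only [transposeFamily_apply, Finset.mul_sum, WithLp.ofLp_sum, WithLp.ofLp_smul,
    Finset.sum_apply, Pi.smul_apply, smul_eq_mul, PiLp.inner_apply, RCLike.inner_apply,
    conj_trivial, Finset.sum_mul]
  rw [Finset.sum_comm]
  exact Finset.sum_congr rfl fun _ _ => Finset.sum_congr rfl fun _ _ => by ring

lemma sum_inner_smul_eq_smul_iff [Fintype ι] [Fintype κ] [DecidableEq κ]
    (v : ι → EuclideanSpace ℝ κ) (A : ℝ) :
    (∀ x, ∑ i, ⟪x, v i⟫_ℝ • v i = A • x) ↔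
      ∀ k l, ⟪transposeFamily v k, transposeFamily v l⟫_ℝ = if k = l then A else 0 := by
  constructor
  · intro h k l
    simpa [sum_inner_smul_apply, PiLp.single_apply, eq_comm] using
      congr($(h (EuclideanSpace.single k 1)) l)
  · intro h x
    ext l
    simp [sum_inner_smul_apply, h, mul_comm]

lemma OrthonormalBasis.inner_transposeFamily [Fintype ι] [Fintype κ] [DecidableEq κ]
    (b : OrthonormalBasis ι ℝ (EuclideanSpace ℝ κ)) (k l : κ) :
    ⟪transposeFamily b k, transposeFamily b l⟫_ℝ = if k = l then 1 else 0 := by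
  refine (sum_inner_smul_eq_smul_iff b 1).1 (fun x => ?_) k l
  simpa [real_inner_comm] using b.sum_repr' x

lemma Orthonormal.exists_orthonormal_inner_transposeFamily_eq_sub [Fintype ι] [Fintype κ]
    [DecidableEq κ] {ι' : Type*} [Fintype ι'] {r : ι → EuclideanSpace ℝ κ}
    (hr : Orthonormal ℝ r) (hcard : Fintype.card ι + Fintype.card ι' = Fintype.card κ) :
    ∃ g : ι' → EuclideanSpace ℝ κ, Orthonormal ℝ g ∧ ∀ k l,
      ⟪transposeFamily g k, transposeFamily g l⟫_ℝ =
        (if k = l then 1 else 0) - ⟪transposeFamily r k, transposeFamily r l⟫_ℝ := by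
  obtain ⟨b, hb⟩ := Orthonormal.exists_orthonormalBasis_extension_of_card_eq
    (v := Sum.elim r (0 : ι' → EuclideanSpace ℝ κ)) (s := Set.range Sum.inl)
    (by rw [finrank_euclideanSpace, Fintype.card_sum, hcard])
    (by
      have hrestrict : (Set.range Sum.inl).domRestrict (Sum.elim r (0 : ι' → EuclideanSpace ℝ κ)) =
          r ∘ (Equiv.ofInjective _ Sum.inl_injective).symm := by
        ext1 ⟨_, i, rfl⟩
        simp
      rw [hrestrict]
      exact hr.comp _ (Equiv.symm _).injective)
  refine ⟨b ∘ Sum.inr, b.orthonormal.comp _ Sum.inr_injective, fun k l => ?_⟩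
  have hbr : (b : ι ⊕ ι' → EuclideanSpace ℝ κ) = Sum.elim r (b ∘ Sum.inr) := by
    ext1 (i | j)
    · exact hb _ ⟨i, rfl⟩
    · rfl
  have hcols := b.inner_transposeFamily k l
  rw [hbr, inner_transposeFamily_sumElim] at hcols
  linarith

end transposeFamily

lemma exists_naimark_complement {ι κ ι' : Type*} [Fintype ι] [Fintype κ] [Fintype ι']
    [DecidableEq ι] {φ : ι → EuclideanSpace ℝ κ} {A : ℝ}
    (hA : 0 < A) (hφ : ∀ x, ∑ i, ⟪x, φ i⟫_ℝ • φ i = A • x) {B : ℝ} (hB : 0 ≤ B)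
    (hcard : Fintype.card κ + Fintype.card ι' = Fintype.card ι) :
    ∃ ψ : ι → EuclideanSpace ℝ ι', (∀ x, ∑ i, ⟪x, ψ i⟫_ℝ • ψ i = B • x) ∧
      ∀ i j, ⟪ψ i, ψ j⟫_ℝ = B * ((if i = j then 1 else 0) - A⁻¹ * ⟪φ i, φ j⟫_ℝ) := by
  classical
  have hrows := (sum_inner_smul_eq_smul_iff φ A).1 hφ
  set r := (√A)⁻¹ • transposeFamily φ
  have hr : Orthonormal ℝ r := by
    rw [orthonormal_iff_ite]
    intro k l
    simp only [r, Pi.smul_apply, real_inner_smul_left, real_inner_smul_right, hrows]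
    split_ifs
    · rw [← mul_assoc, ← mul_inv, Real.mul_self_sqrt hA.le, inv_mul_cancel₀ hA.ne']
    · simp
  obtain ⟨g, hg, hgr⟩ := hr.exists_orthonormal_inner_transposeFamily_eq_sub hcard
  refine ⟨√B • transposeFamily g, (sum_inner_smul_eq_smul_iff _ B).2 fun k l => ?_, fun i j => ?_⟩
  · rw [transposeFamily_smul, transposeFamily_transposeFamily]
    simp only [Pi.smul_apply, real_inner_smul_left, real_inner_smul_right,
      orthonormal_iff_ite.1 hg]
    rw [← mul_assoc, Real.mul_self_sqrt hB]
    split_ifs <;> simp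
  · simp only [Pi.smul_apply, real_inner_smul_left, real_inner_smul_right, hgr, r,
      transposeFamily_smul, transposeFamily_transposeFamily]
    rw [← mul_assoc, Real.mul_self_sqrt hB, ← mul_assoc, ← mul_inv, Real.mul_self_sqrt hA.le]

/-- **Naimark complement (real case).** If a real ETF of `N` vectors exists in
`ℝ^M` (with `M < N`), then a real ETF of `N` vectors exists in `ℝ^(N-M)`. -/
theorem real_etf_naimark (M N : ℕ) (hM : 1 ≤ M) (hMN : M < N)
    (h : ∃ φ : Fin N → EuclideanSpace ℝ (Fin M), IsRealETF M N φ) :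
    ∃ ψ : Fin N → EuclideanSpace ℝ (Fin (N - M)), IsRealETF (N - M) N ψ := by
  obtain ⟨φ, hnorm, ⟨c, hc⟩, hφ⟩ := h
  have hMpos : (0 : ℝ) < M := by exact_mod_cast hM
  have hN : (0 : ℝ) < N := by exact_mod_cast Nat.zero_lt_of_lt hMN
  have hNM : (0 : ℝ) < (N - M : ℕ) := by exact_mod_cast Nat.sub_pos_of_lt hMN
  obtain ⟨ψ, hψ, hgram⟩ := exists_naimark_complement (ι' := Fin (N - M)) (by positivity) hφ
    (B := N / (N - M : ℕ)) (by positivity) (by simp only [Fintype.card_fin]; omega)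
  have hφφ (i : Fin N) : ⟪φ i, φ i⟫_ℝ = 1 := by
    rw [real_inner_self_eq_norm_sq, hnorm, one_pow]
  refine ⟨ψ, fun i => ?_, ⟨M / (N - M : ℕ) * c, fun i j hij => ?_⟩, hψ⟩
  · have hψψ : ⟪ψ i, ψ i⟫_ℝ = 1 := by
      rw [hgram, if_pos rfl, hφφ]
      field_simp
      exact (Nat.cast_sub hMN.le).symm
    rwa [real_inner_self_eq_norm_sq, pow_eq_one_iff_of_nonneg (norm_nonneg _) two_ne_zero]
      at hψψ
  · rw [hgram, if_neg hij, zero_sub, abs_mul, abs_neg, abs_mul, hc i j hij,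
      abs_of_pos (div_pos hN hNM), abs_inv, abs_of_pos (div_pos hN hMpos)]
    field_simp
end

section
/- If there exists a (v,k,λ,μ)-strongly regular graph with μ = 1, then (λ+1)(λ+2) divides v·k. -/
set_option maxHeartbeats 1000000

open Finset SimpleGraph

/-- If a `(v,k,λ,1)`-strongly regular graph exists, then `(λ+1)(λ+2)` divides `v·k`. -/
theorem srg_mu_one_divisibility (v k l : ℕ)
    (h : ∃ (V : Type) (_ : Fintype V) (G : SimpleGraph V) (_ : DecidableRel G.Adj),
      G.IsSRGWith v k l 1) :
    (l + 1) * (l + 2) ∣ v * k := by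
  obtain ⟨V, _, G, _, hsrg⟩ := h
  classical
  -- the clique generated by an edge
  set C : V → V → Finset V :=
    fun x y => insert x (insert y (G.commonNeighbors x y).toFinset) with hCdef
  have hmemC : ∀ x y z : V, z ∈ C x y ↔ z = x ∨ z = y ∨ z ∈ G.commonNeighbors x y := by
    intro x y z
    simp [hCdef, Set.mem_toFinset]
  -- cardinality of the clique
  have hcard : ∀ x y : V, G.Adj x y → (C x y).card = l + 2 := by
    intro x y hxy
    have hx : x ∉ G.commonNeighbors x y := SimpleGraph.notMem_commonNeighbors_left G x y
    have hy : y ∉ G.commonNeighbors x y := SimpleGraph.notMem_commonNeighbors_right G x y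
    have hxy' : x ≠ y := G.ne_of_adj hxy
    rw [hCdef]
    rw [Finset.card_insert_of_notMem, Finset.card_insert_of_notMem]
    · rw [Set.toFinset_card, hsrg.of_adj x y hxy]
    · simpa [Set.mem_toFinset] using hy
    · simp only [Finset.mem_insert, Set.mem_toFinset]
      push_neg
      exact ⟨hxy', hx⟩
  -- the clique is indeed a clique
  have hclique : ∀ x y : V, G.Adj x y → ∀ a ∈ C x y, ∀ b ∈ C x y, a ≠ b → G.Adj a b := by
    intro x y hxy a ha b hb hab
    rw [hmemC] at ha hb
    have key : ∀ z w : V, z ∈ G.commonNeighbors x y → w ∈ G.commonNeighbors x y →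
        z ≠ w → G.Adj z w := by
      intro z w hz hw hzw
      by_contra hadj
      have h1 : Fintype.card (G.commonNeighbors z w) = 1 := hsrg.of_not_adj hzw hadj
      have hxm : x ∈ G.commonNeighbors z w := ⟨hz.1.symm, hw.1.symm⟩
      have hym : y ∈ G.commonNeighbors z w := ⟨hz.2.symm, hw.2.symm⟩
      have : 1 < Fintype.card (G.commonNeighbors z w) := by
        rw [Fintype.one_lt_card_iff]
        exact ⟨⟨x, hxm⟩, ⟨y, hym⟩, by simp [G.ne_of_adj hxy]⟩
      omega
    rcases ha with rfl | rfl | ha <;> rcases hb with rfl | rfl | hb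
    · exact absurd rfl hab
    · exact hxy
    · exact hb.1
    · exact hxy.symm
    · exact absurd rfl hab
    · exact hb.2
    · exact ha.1.symm
    · exact ha.2.symm
    · exact key a b ha hb hab
  -- the clique is determined by any of its edges
  have hsame : ∀ x y : V, G.Adj x y → ∀ a ∈ C x y, ∀ b ∈ C x y, a ≠ b → C a b = C x y := by
    intro x y hxy a ha b hb hab
    have hadj : G.Adj a b := hclique x y hxy a ha b hb hab
    refine (Finset.eq_of_subset_of_card_le ?_ ?_).symm
    · intro c hc
      rw [hmemC]
      by_cases hca : c = a
      · exact Or.inl hca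
      by_cases hcb : c = b
      · exact Or.inr (Or.inl hcb)
      refine Or.inr (Or.inr ⟨?_, ?_⟩)
      · exact hclique x y hxy a ha c hc (fun e => hca e.symm)
      · exact hclique x y hxy b hb c hc (fun e => hcb e.symm)
    · rw [hcard x y hxy, hcard a b hadj]
  -- the set of directed edges
  set E : Finset (V × V) := Finset.univ.filter (fun p => G.Adj p.1 p.2) with hE
  -- card E = v * k
  have hEcard : E.card = v * k := by
    rw [Finset.card_eq_sum_card_fiberwise (f := Prod.fst) (t := Finset.univ)
      (fun x _ => Finset.mem_univ _)]
    have : ∀ x : V, (E.filter fun p => p.1 = x).card = k := by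
      intro x
      have : (E.filter fun p => p.1 = x) = {x} ×ˢ G.neighborFinset x := by
        ext p
        simp only [hE, Finset.mem_filter, Finset.mem_univ, true_and, Finset.mem_product,
          Finset.mem_singleton, SimpleGraph.mem_neighborFinset]
        constructor
        · rintro ⟨h1, rfl⟩; exact ⟨rfl, h1⟩
        · rintro ⟨rfl, h2⟩; exact ⟨h2, rfl⟩
      rw [this, Finset.card_product, Finset.card_singleton, one_mul,
        SimpleGraph.card_neighborFinset_eq_degree, hsrg.regular x]
    simp only [this, Finset.sum_const, Finset.card_univ, hsrg.card, smul_eq_mul]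
  -- fibers of the clique map
  have hfiber : ∀ c ∈ E.image (fun p => C p.1 p.2),
      (E.filter fun p => C p.1 p.2 = c).card = (l + 1) * (l + 2) := by
    intro c hc
    rw [Finset.mem_image] at hc
    obtain ⟨⟨a, b⟩, hab, hcab⟩ := hc
    rw [hE, Finset.mem_filter] at hab
    have hadj : G.Adj a b := hab.2
    have heq : (E.filter fun p => C p.1 p.2 = c) = c.offDiag := by
      ext ⟨x, y⟩
      simp only [Finset.mem_filter, Finset.mem_offDiag, hE, Finset.mem_univ, true_and]
      constructor
      · rintro ⟨hxy, rfl⟩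
        refine ⟨?_, ?_, G.ne_of_adj hxy⟩
        · rw [hmemC]; exact Or.inl rfl
        · rw [hmemC]; exact Or.inr (Or.inl rfl)
      · rintro ⟨hx, hy, hne⟩
        rw [← hcab] at hx hy
        exact ⟨hclique a b hadj x hx y hy hne,
          by rw [hsame a b hadj x hx y hy hne, hcab]⟩
    have hccard : c.card = l + 2 := by rw [← hcab]; exact hcard a b hadj
    rw [heq, Finset.offDiag_card, hccard]
    have : (l + 2) * (l + 2) = (l + 1) * (l + 2) + (l + 2) := by ring
    omega
  have : E.card = (E.image (fun p => C p.1 p.2)).card * ((l + 1) * (l + 2)) := by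
    rw [Finset.card_eq_sum_card_fiberwise (f := fun p => C p.1 p.2)
      (t := E.image (fun p => C p.1 p.2)) (fun p hp => Finset.mem_image_of_mem _ hp)]
    rw [Finset.sum_congr rfl hfiber, Finset.sum_const, smul_eq_mul]
  rw [hEcard] at this
  exact Dvd.intro _ (by rw [this, Nat.mul_comm])
end

section
/- Necessary conditions at redundancy 2: Let M be a positive integer. If there exists a real equiangular tight frame of 2M vectors in ℝ^M, then M is odd and 2M − 1 is a sum of two squares (i.e., there exist integers a, b with 2M − 1 = a² + b²). -/
open scoped InnerProductSpace

/-!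
The Gram matrix `G` of a real ETF of `2M` vectors in `ℝ^M` satisfies `G * G = 2 • G`. Writing
`G = 1 + c • S` with `S` the matrix of signs of the off-diagonal entries turns this into
`S * S = (2M - 1) • 1`: `S` is a symmetric conference matrix. Comparing three of its rows modulo
`4` forces `2M ≡ 2 (mod 4)`.

Over `ℚ`, `S * Sᵀ = k • 1` with `k = 2M - 1` says that the quadratic forms `x ⬝ᵥ x` and `k (x ⬝ᵥ x)`
on `ℚ^(2M)` are isometric. As `k` is a sum of four squares, the two forms are already isometric
on `ℚ^4` (multiplication by a quaternion of norm `k`), and Witt cancellation, proved with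
reflections, strips off four coordinates at a time until `ℚ^2` is left, where `k` has to be a sum
of two rational squares, hence of two integer squares.
-/

open Matrix

section Reflection

variable {K : Type*} [Field K] {α : Type*} [Fintype α]

def dotReflection (u x : α → K) : α → K := x - (2 * (x ⬝ᵥ u) / (u ⬝ᵥ u)) • u

variable {u v w x : α → K}

theorem dotReflection_dotProduct_dotReflection (hu : u ⬝ᵥ u ≠ 0) (x y : α → K) :
    dotReflection u x ⬝ᵥ dotReflection u y = x ⬝ᵥ y := by
  simp only [dotReflection, sub_dotProduct, dotProduct_sub, smul_dotProduct, dotProduct_smul,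
    smul_eq_mul, dotProduct_comm u y]
  field_simp
  ring

theorem dotReflection_of_dotProduct_eq_zero (h : x ⬝ᵥ u = 0) : dotReflection u x = x := by
  simp [dotReflection, h]

theorem dotReflection_neg_self (hu : u ⬝ᵥ u ≠ 0) : dotReflection u (-u) = u := by
  rw [dotReflection, neg_dotProduct, mul_neg, neg_div, mul_div_assoc, div_self hu]
  module

theorem dotReflection_sub_self (h : v ⬝ᵥ v = w ⬝ᵥ w) (hvw : (v - w) ⬝ᵥ (v - w) ≠ 0) :
    dotReflection (v - w) v = w := by
  have : 2 * (v ⬝ᵥ (v - w)) = (v - w) ⬝ᵥ (v - w) := by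
    simp only [dotProduct_sub, sub_dotProduct, dotProduct_comm w v, h]
    ring
  rw [dotReflection, this, div_self hvw, one_smul, sub_sub_cancel]

theorem exists_dotProduct_preserving_map [NeZero (2 : K)] (hv : v ⬝ᵥ v ≠ 0)
    (h : v ⬝ᵥ v = w ⬝ᵥ w) :
    ∃ f : (α → K) → α → K, (∀ x y, f x ⬝ᵥ f y = x ⬝ᵥ y) ∧ f v = w ∧
      ∀ x, x ⬝ᵥ v = 0 → x ⬝ᵥ w = 0 → f x = x := by
  by_cases hvw : (v - w) ⬝ᵥ (v - w) = 0
  · -- then `v + w` is anisotropic, and reflecting in `v + w` and then in `w` sends `v` to `w`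
    have hw : w ⬝ᵥ w ≠ 0 := h ▸ hv
    have hvw' : (v - -w) ⬝ᵥ (v - -w) ≠ 0 := by
      have : (v - -w) ⬝ᵥ (v - -w) = 4 * (v ⬝ᵥ v) - (v - w) ⬝ᵥ (v - w) := by
        simp only [dotProduct_sub, sub_dotProduct, dotProduct_neg, neg_dotProduct,
          dotProduct_comm w v, h]
        ring
      rw [this, hvw, sub_zero]
      exact mul_ne_zero (by simpa [show (4 : K) = 2 * 2 by norm_num] using two_ne_zero) hv
    refine ⟨fun x => dotReflection w (dotReflection (v - -w) x), fun x y => ?_, ?_,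
      fun x hxv hxw => ?_⟩
    · rw [dotReflection_dotProduct_dotReflection hw,
        dotReflection_dotProduct_dotReflection hvw']
    · beta_reduce
      rw [dotReflection_sub_self (by simp [h]) hvw', dotReflection_neg_self hw]
    · beta_reduce
      rw [dotReflection_of_dotProduct_eq_zero (u := v - -w) (by simp [hxv, hxw]),
        dotReflection_of_dotProduct_eq_zero hxw]
  · exact ⟨dotReflection (v - w), dotReflection_dotProduct_dotReflection hvw,
      dotReflection_sub_self h hvw,
      fun x hxv hxw => dotReflection_of_dotProduct_eq_zero (by simp [dotProduct_sub, hxv, hxw])⟩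

end Reflection

section ScaledOrthogonal

variable {K : Type*} [Field K]

theorem mul_transpose_eq_smul_one_iff {ι α : Type*} [Fintype α] [DecidableEq ι]
    {A : Matrix ι α K} {k : K} :
    A * Aᵀ = k • 1 ↔ ∀ i j, A i ⬝ᵥ A j = if i = j then k else 0 := by
  simp only [← Matrix.ext_iff, mul_apply', Matrix.smul_apply, one_apply, smul_eq_mul, mul_ite,
    mul_one, mul_zero]
  rfl

theorem submatrix_mul_transpose_eq_smul_one {l m n o : Type*} [Fintype n] [Fintype o]
    [DecidableEq l] [DecidableEq m] {A : Matrix m n K} {k : K} (hA : A * Aᵀ = k • 1)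
    (e : l ≃ m) (e' : o ≃ n) : A.submatrix e e' * (A.submatrix e e')ᵀ = k • 1 := by
  rw [transpose_submatrix, submatrix_mul_equiv, hA]
  ext i j
  simp [one_apply]

theorem dotProduct_sum_type {β γ : Type*} [Fintype β] [Fintype γ] (x y : β ⊕ γ → K) :
    x ⬝ᵥ y = (x ∘ Sum.inl) ⬝ᵥ (y ∘ Sum.inl) + (x ∘ Sum.inr) ⬝ᵥ (y ∘ Sum.inr) := by
  simp [dotProduct, Fintype.sum_sum_type]

theorem eq_zero_of_mulVec_eq_zero_of_mul_transpose {n : Type*} [Fintype n] [DecidableEq n]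
    {Q : Matrix n n K} {k : K} (hk : k ≠ 0) (hQ : Q * Qᵀ = k • 1) {x : n → K}
    (hx : Q *ᵥ x = 0) : x = 0 := by
  have : (k⁻¹ • Qᵀ) * Q = 1 := by
    rw [mul_eq_one_comm, Matrix.mul_smul, hQ, smul_smul, inv_mul_cancel₀ hk, one_smul]
  rw [← one_mulVec x, ← this, ← mulVec_mulVec, hx, mulVec_zero]

/-- The rows of the matrix of left multiplication by the quaternion `a + bi + cj + dk`. -/
theorem exists_mul_transpose_eq_sum_four_sq_smul_one {R : Type*} [CommRing R] (a b c d : R) :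
    ∃ Q : Matrix (Fin 4) (Fin 4) R, Q * Qᵀ = (a ^ 2 + b ^ 2 + c ^ 2 + d ^ 2) • 1 := by
  refine ⟨!![a, b, c, d; -b, a, -d, c; -c, d, a, -b; -d, -c, b, a], ?_⟩
  ext i j
  fin_cases i <;> fin_cases j <;> simp [Matrix.mul_apply, Fin.sum_univ_four] <;> ring

theorem sq_add_sq_of_mul_transpose {R : Type*} [CommRing R] {k : R}
    {B : Matrix (Fin 2) (Fin 2) R} (hB : B * Bᵀ = k • 1) : k = B 0 0 ^ 2 + B 0 1 ^ 2 := by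
  simpa [Matrix.mul_apply, Fin.sum_univ_two, sq, eq_comm] using congrFun₂ hB 0 0

variable [NeZero (2 : K)] {α : Type*} [Fintype α]

/-- Witt's extension theorem for two orthogonal families of vectors of the same anisotropic
length `k`. -/
theorem exists_dotProduct_preserving_map_of_mul_transpose {k : K} (hk : k ≠ 0) {q : ℕ}
    {u s : Matrix (Fin q) α K} (hu : u * uᵀ = k • 1) (hs : s * sᵀ = k • 1) :
    ∃ f : (α → K) → α → K, (∀ x y, f x ⬝ᵥ f y = x ⬝ᵥ y) ∧ ∀ t, f (u t) = s t := by
  induction q with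
  | zero => exact ⟨id, fun _ _ => rfl, fun t => t.elim0⟩
  | succ q ih =>
    rw [mul_transpose_eq_smul_one_iff] at hu hs
    obtain ⟨f, hf, hfu⟩ := ih (u := fun t => u t.castSucc) (s := fun t => s t.castSucc)
      (mul_transpose_eq_smul_one_iff.2 fun i j => by simp [hu, Fin.castSucc_inj])
      (mul_transpose_eq_smul_one_iff.2 fun i j => by simp [hs, Fin.castSucc_inj])
    obtain ⟨g, hg, hgv, hgfix⟩ := exists_dotProduct_preserving_map (v := f (u (Fin.last q)))
      (w := s (Fin.last q)) (by simp [hf, hu, hk]) (by simp [hf, hu, hs])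
    refine ⟨g ∘ f, fun x y => by simp [hg, hf], Fin.lastCases hgv fun t => ?_⟩
    have hne : t.castSucc ≠ Fin.last q := (Fin.castSucc_lt_last t).ne
    simp only [Function.comp_apply, hfu t]
    exact hgfix _ (by rw [← hfu, hf, hu, if_neg hne]) (by rw [hs, if_neg hne])

theorem exists_mul_transpose_eq_smul_one_of_sum_fin_four {ι β : Type*} [DecidableEq ι]
    [Fintype β] {k : K} (hk : k ≠ 0) (hsq : ∃ a b c d : K, k = a ^ 2 + b ^ 2 + c ^ 2 + d ^ 2)
    {A : Matrix (ι ⊕ Fin 4) (β ⊕ Fin 4) K} (hA : A * Aᵀ = k • 1) :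
    ∃ B : Matrix ι β K, B * Bᵀ = k • 1 := by
  obtain ⟨a, b, c, d, rfl⟩ := hsq
  obtain ⟨Q, hQ⟩ := exists_mul_transpose_eq_sum_four_sq_smul_one a b c d
  have hs : ∀ t t', Sum.elim (0 : β → K) (Q t) ⬝ᵥ Sum.elim 0 (Q t') =
      if t = t' then a ^ 2 + b ^ 2 + c ^ 2 + d ^ 2 else 0 := fun t t' => by
    rw [sumElim_dotProduct_sumElim, zero_dotProduct, zero_add,
      mul_transpose_eq_smul_one_iff.1 hQ]
  rw [mul_transpose_eq_smul_one_iff] at hA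
  obtain ⟨f, hf, hfA⟩ := exists_dotProduct_preserving_map_of_mul_transpose hk
    (u := fun t => A (Sum.inr t)) (mul_transpose_eq_smul_one_iff.2 fun i j => by simp [hA])
    (mul_transpose_eq_smul_one_iff.2 hs)
  have hinr : ∀ i, f (A (Sum.inl i)) ∘ Sum.inr = 0 := by
    intro i
    refine eq_zero_of_mulVec_eq_zero_of_mul_transpose hk hQ (funext fun t => ?_)
    have := hf (A (Sum.inr t)) (A (Sum.inl i))
    rw [hfA, hA, if_neg Sum.inr_ne_inl, dotProduct_sum_type] at this
    rwa [Sum.elim_comp_inl, Sum.elim_comp_inr, zero_dotProduct, zero_add] at this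
  refine ⟨fun i => f (A (Sum.inl i)) ∘ Sum.inl, mul_transpose_eq_smul_one_iff.2 fun i j => ?_⟩
  have := hf (A (Sum.inl i)) (A (Sum.inl j))
  rw [hA, dotProduct_sum_type, hinr, hinr, zero_dotProduct, add_zero] at this
  simpa using this

theorem exists_mul_transpose_eq_smul_one_of_add_four_mul {k : K} (hk : k ≠ 0)
    (hsq : ∃ a b c d : K, k = a ^ 2 + b ^ 2 + c ^ 2 + d ^ 2) (n j : ℕ)
    (h : ∃ A : Matrix (Fin (n + 4 * j)) (Fin (n + 4 * j)) K, A * Aᵀ = k • 1) :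
    ∃ B : Matrix (Fin n) (Fin n) K, B * Bᵀ = k • 1 := by
  induction j generalizing n with
  | zero => simpa using h
  | succ j ih =>
    obtain ⟨A, hA⟩ := ih (n + 4) (by rwa [show n + 4 + 4 * j = n + 4 * (j + 1) by ring])
    exact exists_mul_transpose_eq_smul_one_of_sum_fin_four hk hsq
      (submatrix_mul_transpose_eq_smul_one hA finSumFinEquiv finSumFinEquiv)

end ScaledOrthogonal

theorem Nat.exists_sq_add_sq_of_mul_sq {m e : ℕ} (he : e ≠ 0)
    (h : ∃ a b : ℕ, m * e ^ 2 = a ^ 2 + b ^ 2) : ∃ a b : ℕ, m = a ^ 2 + b ^ 2 := by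
  rcases eq_or_ne m 0 with rfl | hm
  · exact ⟨0, 0, rfl⟩
  rw [Nat.eq_sq_add_sq_iff] at h ⊢
  intro q hq hq4
  have : Fact q.Prime := ⟨Nat.prime_of_mem_primeFactors hq⟩
  have hdvd : q ∈ (m * e ^ 2).primeFactors :=
    Nat.primeFactors_mono (dvd_mul_right m _) (mul_ne_zero hm (pow_ne_zero 2 he)) hq
  have := h q hdvd hq4
  rwa [padicValNat.mul hm (pow_ne_zero 2 he), padicValNat.pow, Nat.even_add,
    iff_true_right (even_two_mul _)] at this

theorem Nat.exists_sq_add_sq_of_cast_eq {m : ℕ} {x y : ℚ} (h : (m : ℚ) = x ^ 2 + y ^ 2) :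
    ∃ a b : ℕ, m = a ^ 2 + b ^ 2 := by
  refine Nat.exists_sq_add_sq_of_mul_sq (e := x.den * y.den) (by positivity)
    ⟨(x.num * y.den).natAbs, (y.num * x.den).natAbs, ?_⟩
  have hx : (x.num : ℚ) = x * x.den := by rw [Rat.mul_den_eq_num]
  have hy : (y.num : ℚ) = y * y.den := by rw [Rat.mul_den_eq_num]
  have : (m : ℚ) * (x.den * y.den) ^ 2 = (x.num * y.den) ^ 2 + (y.num * x.den) ^ 2 := by
    rw [hx, hy, h]
    ring
  zify
  rw [sq_abs, sq_abs]
  exact_mod_cast this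

theorem Nat.exists_sq_add_sq_of_mul_transpose {ι : Type*} [Fintype ι] [DecidableEq ι] {k : ℕ}
    (hk : k ≠ 0) (hι : Fintype.card ι % 4 = 2) {A : Matrix ι ι ℚ} (hA : A * Aᵀ = (k : ℚ) • 1) :
    ∃ a b : ℕ, k = a ^ 2 + b ^ 2 := by
  obtain ⟨a, b, c, d, hsum⟩ := Nat.sum_four_squares k
  let e := Fintype.equivFinOfCardEq (show Fintype.card ι = 2 + 4 * (Fintype.card ι / 4) by omega)
  obtain ⟨B, hB⟩ := exists_mul_transpose_eq_smul_one_of_add_four_mul (k := (k : ℚ))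
    (Nat.cast_ne_zero.2 hk)
    ⟨a, b, c, d, by rw [← hsum]; push_cast; ring⟩ 2 (Fintype.card ι / 4)
    ⟨_, submatrix_mul_transpose_eq_smul_one hA e.symm e.symm⟩
  exact Nat.exists_sq_add_sq_of_cast_eq (sq_add_sq_of_mul_transpose hB)

structure IsSeidelMatrix {n : Type*} (S : Matrix n n ℤ) : Prop where
  transpose_eq : Sᵀ = S
  apply_self : ∀ i, S i i = 0
  apply_of_ne : ∀ i j, i ≠ j → S i j = 1 ∨ S i j = -1

namespace IsSeidelMatrix

variable {n : Type*} {S : Matrix n n ℤ}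

theorem apply_comm (hS : IsSeidelMatrix S) (i j : n) : S i j = S j i := by
  rw [← transpose_apply S j i, hS.transpose_eq]

variable [Fintype n] [DecidableEq n]

theorem mul_self_apply_self (hS : IsSeidelMatrix S) (i : n) :
    (S * S) i i = Fintype.card n - 1 := by
  have hsq : ∀ k ∈ Finset.univ.erase i, S i k * S k i = 1 := by
    intro k hk
    rw [hS.apply_comm k i]
    rcases hS.apply_of_ne i k (Finset.ne_of_mem_erase hk).symm with h | h <;> simp [h]
  rw [Matrix.mul_apply, ← Finset.add_sum_erase _ _ (Finset.mem_univ i), hS.apply_self,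
    zero_mul, zero_add, Finset.sum_congr rfl hsq, Finset.sum_const,
    Finset.card_erase_of_mem (Finset.mem_univ i), Finset.card_univ, nsmul_one,
    Nat.cast_pred (Fintype.card_pos_iff.2 ⟨i⟩)]

theorem card_mod_four_eq_two (hS : IsSeidelMatrix S)
    (hSS : S * S = (Fintype.card n - 1 : ℤ) • 1) (hn : 1 < Fintype.card n) :
    Fintype.card n % 4 = 2 := by
  rcases (Nat.succ_le_of_lt hn).eq_or_lt with h2 | h2
  · rw [← h2]
  obtain ⟨a, b, c, hab, hac, hbc⟩ := Fintype.two_lt_card_iff.1 h2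
  have horth : ∀ i j, ∑ k, S i k * S j k = if i = j then (Fintype.card n - 1 : ℤ) else 0 := by
    intro i j
    simpa [Matrix.mul_apply, hS.apply_comm _ j, Matrix.one_apply] using congrFun₂ hSS i j
  set f := fun k => (S a k + S b k) * (S a k + S c k)
  have hsum : ∑ k, f k = Fintype.card n - 1 := by
    simp only [f, add_mul, mul_add, Finset.sum_add_distrib, horth]
    simp [hac, hbc, Ne.symm hab]
  -- every term `f k` with `k ∉ {a, b, c}` is `0` or `±4`
  have hdvd : (4 : ℤ) ∣ ∑ k ∈ Finset.univ \ {a, b, c}, f k := by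
    refine Finset.dvd_sum fun k hk => ?_
    simp only [Finset.mem_sdiff, Finset.mem_univ, Finset.mem_insert, Finset.mem_singleton,
      true_and, not_or] at hk
    rcases hS.apply_of_ne a k (Ne.symm hk.1) with h0 | h0 <;>
    rcases hS.apply_of_ne b k (Ne.symm hk.2.1) with h1 | h1 <;>
    rcases hS.apply_of_ne c k (Ne.symm hk.2.2) with h2 | h2 <;>
    simp [f, h0, h1, h2]
  obtain ⟨t, ht⟩ := hdvd
  rw [← Finset.sum_sdiff (Finset.subset_univ {a, b, c}), ht, Finset.sum_insert (by simp [hab, hac]),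
    Finset.sum_pair hbc] at hsum
  simp only [f, hS.apply_self, hS.apply_comm b a, hS.apply_comm c a, hS.apply_comm c b] at hsum
  rcases hS.apply_of_ne a b hab with h0 | h0 <;>
  rcases hS.apply_of_ne a c hac with h1 | h1 <;>
  rcases hS.apply_of_ne b c hbc with h2 | h2 <;>
  simp only [h0, h1, h2] at hsum <;> omega

theorem exists_sq_add_sq (hS : IsSeidelMatrix S) (hSS : S * S = (Fintype.card n - 1 : ℤ) • 1)
    (hn : 1 < Fintype.card n) : ∃ a b : ℤ, (Fintype.card n : ℤ) - 1 = a ^ 2 + b ^ 2 := by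
  have hSSt : S.map ((↑) : ℤ → ℚ) * (S.map (↑))ᵀ = ((Fintype.card n - 1 : ℕ) : ℚ) • 1 := by
    rw [← transpose_map, hS.transpose_eq, ← map_mul_intCast, hSS]
    ext i j
    simp only [map_apply, Matrix.smul_apply, one_apply, smul_eq_mul]
    split_ifs <;> push_cast [Nat.cast_sub hn.le] <;> ring
  obtain ⟨a, b, hab⟩ := Nat.exists_sq_add_sq_of_mul_transpose (by omega)
    (hS.card_mod_four_eq_two hSS hn) hSSt
  exact ⟨a, b, by rw [← Nat.cast_pred (by omega), hab]; push_cast; ring⟩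

end IsSeidelMatrix

theorem exists_isSeidelMatrix_of_gram {n : Type*} [Fintype n] [DecidableEq n] [Nonempty n]
    {G : Matrix n n ℝ} (hsymm : Gᵀ = G) (hdiag : ∀ i, G i i = 1) {c : ℝ}
    (hc : ∀ i j, i ≠ j → |G i j| = c) (hG : G * G = 2 • G) :
    ∃ S : Matrix n n ℤ, IsSeidelMatrix S ∧ S * S = (Fintype.card n - 1 : ℤ) • 1 := by
  set S : Matrix n n ℤ := of fun i j => if i = j then 0 else (SignType.sign (G i j) : ℤ)
  have hGS : G = 1 + c • S.map (↑) := by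
    ext i j
    by_cases hij : i = j
    · simp [S, hij, hdiag]
    · simp [S, hij, ← hc i j hij]
  have hS2 : c ^ 2 • (S * S).map ((↑) : ℤ → ℝ) = 1 := by
    set U := c • S.map ((↑) : ℤ → ℝ)
    have hU : U * U = 1 := by
      have : U * U = (1 + U) * (1 + U) - 2 • (1 + U) + 1 := by noncomm_ring
      rw [this, ← hGS, hG, sub_self, zero_add]
    rwa [smul_mul_smul_comm, ← sq, ← map_mul_intCast] at hU
  have hc0 : c ≠ 0 := by
    rintro rfl
    simp at hS2
  have hS : IsSeidelMatrix S := by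
    refine ⟨?_, fun i => by simp [S], fun i j hij => ?_⟩
    · ext i j
      have : G j i = G i j := by simpa using congrFun₂ hsymm i j
      by_cases hij : i = j
      · simp [S, hij]
      · simp [S, hij, Ne.symm hij, this]
    · have : G i j ≠ 0 := by rw [← abs_ne_zero, hc i j hij]; exact hc0
      rcases this.lt_or_gt with h | h <;> simp [S, hij, h]
  refine ⟨S, hS, ?_⟩
  have hmap : (S * S).map ((↑) : ℤ → ℝ) = (c ^ 2)⁻¹ • 1 := by
    rw [← hS2, smul_smul, inv_mul_cancel₀ (pow_ne_zero 2 hc0), one_smul]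
  obtain ⟨i₀⟩ := ‹Nonempty n›
  have hr : (c ^ 2)⁻¹ = (Fintype.card n - 1 : ℝ) := by
    simpa [hS.mul_self_apply_self] using (congrFun₂ hmap i₀ i₀).symm
  ext i j
  have := congrFun₂ hmap i j
  rw [hr] at this
  by_cases hij : i = j <;> simp [hij] at this ⊢ <;> exact_mod_cast this

theorem gram_mul_gram_of_sum_inner_smul {E : Type*} [NormedAddCommGroup E]
    [InnerProductSpace ℝ E] {ι : Type*} [Fintype ι] {φ : ι → E} {A : ℝ}
    (h : ∀ x, ∑ n, ⟪x, φ n⟫_ℝ • φ n = A • x) : gram ℝ φ * gram ℝ φ = A • gram ℝ φ := by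
  ext i j
  have := congrArg (fun y => ⟪φ i, y⟫_ℝ) (h (φ j))
  simp only [inner_sum, real_inner_smul_right] at this
  simp [Matrix.mul_apply, gram_apply, ← this, real_inner_comm, mul_comm]

theorem IsRealETF.exists_isSeidelMatrix {M : ℕ} (hM : 1 ≤ M)
    {φ : Fin (2 * M) → EuclideanSpace ℝ (Fin M)} (h : IsRealETF M (2 * M) φ) :
    ∃ S : Matrix (Fin (2 * M)) (Fin (2 * M)) ℤ,
      IsSeidelMatrix S ∧ S * S = (Fintype.card (Fin (2 * M)) - 1 : ℤ) • 1 := by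
  obtain ⟨hunit, ⟨c, hc⟩, htight⟩ := h
  have : Nonempty (Fin (2 * M)) := ⟨⟨0, by omega⟩⟩
  refine exists_isSeidelMatrix_of_gram (G := gram ℝ φ) (c := c) ?_ (fun i => ?_) hc ?_
  · ext i j
    exact real_inner_comm (φ i) (φ j)
  · rw [gram_apply, real_inner_self_eq_norm_sq, hunit, one_pow]
  · rw [gram_mul_gram_of_sum_inner_smul htight, two_nsmul, ← two_smul ℝ]
    congr 1
    field_simp
    push_cast
    ring

/-- **Necessary conditions at redundancy 2.** If a real ETF of `2M` vectors
exists in `ℝ^M`, then `M` is odd and `2M − 1` is a sum of two squares. -/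
theorem real_etf_redundancy_two (M : ℕ) (hM : 1 ≤ M)
    (h : ∃ φ : Fin (2 * M) → EuclideanSpace ℝ (Fin M), IsRealETF M (2 * M) φ) :
    Odd M ∧ ∃ a b : ℤ, (2 * M : ℤ) - 1 = a ^ 2 + b ^ 2 := by
  obtain ⟨φ, hφ⟩ := h
  obtain ⟨S, hS, hSS⟩ := hφ.exists_isSeidelMatrix hM
  have hcard : 1 < Fintype.card (Fin (2 * M)) := by
    rw [Fintype.card_fin]
    omega
  refine ⟨Nat.odd_iff.2 ?_, ?_⟩
  · have := hS.card_mod_four_eq_two hSS hcard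
    rw [Fintype.card_fin] at this
    omega
  · simpa using hS.exists_sq_add_sq hSS hcard
end

section
/- Symmetric conference matrices yield real ETFs of redundancy 2: Let M be a positive integer and N = 2M. If there exists a symmetric N×N conference matrix, i.e., a symmetric matrix C with real entries such that C has zero diagonal, every off-diagonal entry equal to 1 or −1, and C·Cᵀ = (N−1)·I, then there exists a real equiangular tight frame of N vectors in ℝ^M. -/
open scoped InnerProductSpace

set_option maxHeartbeats 1000000 in
/-- **Symmetric conference matrices yield real ETFs of redundancy 2.** If there
is a symmetric `2M × 2M` conference matrix, then there is a real ETF of `2M`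
vectors in `ℝ^M`. -/
theorem conference_matrix_yields_real_etf (M : ℕ) (hM : 1 ≤ M)
    (C : Matrix (Fin (2 * M)) (Fin (2 * M)) ℝ) (hsymm : C.IsSymm)
    (hdiag : ∀ i, C i i = 0)
    (hoff : ∀ i j, i ≠ j → C i j = 1 ∨ C i j = -1)
    (hconf : C * C.transpose = ((2 * M : ℝ) - 1) • 1) :
    ∃ φ : Fin (2 * M) → EuclideanSpace ℝ (Fin M), IsRealETF M (2 * M) φ := by
  classical
  have hMR : (1 : ℝ) ≤ (M : ℝ) := by exact_mod_cast hM
  have hpos : (0 : ℝ) < 2 * (M : ℝ) - 1 := by linarith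
  set s : ℝ := Real.sqrt (2 * (M : ℝ) - 1) with hs
  have hs2 : s * s = 2 * (M : ℝ) - 1 := Real.mul_self_sqrt hpos.le
  have hs0 : 0 < s := Real.sqrt_pos.mpr hpos
  have hsne : s ≠ 0 := ne_of_gt hs0
  have hCC : C * C = ((2 * M : ℝ) - 1) • (1 : Matrix (Fin (2*M)) (Fin (2*M)) ℝ) := by
    have := hconf
    rwa [hsymm.eq] at this
  set G : Matrix (Fin (2*M)) (Fin (2*M)) ℝ := 1 + s⁻¹ • C with hG
  have hGmul : G * G = (2 : ℝ) • G := by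
    have h1 : s⁻¹ * s⁻¹ * (2 * (M:ℝ) - 1) = 1 := by
      field_simp
      nlinarith [hs2]
    rw [hG, add_mul, one_mul, mul_add, mul_one, Matrix.smul_mul, Matrix.mul_smul, hCC,
      smul_smul, smul_smul, h1, one_smul]
    module
  set Pm : Matrix (Fin (2*M)) (Fin (2*M)) ℝ := (2 : ℝ)⁻¹ • G with hPm
  have hPdiag : ∀ i, Pm i i = 2⁻¹ := by
    intro i
    simp [hPm, hG, Matrix.add_apply, Matrix.one_apply, hdiag i]
  have hPoff : ∀ i j, i ≠ j → Pm i j = 2⁻¹ * (s⁻¹ * C i j) := by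
    intro i j h
    simp [hPm, hG, Matrix.add_apply, Matrix.one_apply, h]
  have hPsymm : ∀ i j, Pm i j = Pm j i := by
    intro i j
    by_cases h : i = j
    · subst h; rfl
    · rw [hPoff i j h, hPoff j i (Ne.symm h), hsymm.apply j i]
  have hPP : Pm * Pm = Pm := by
    rw [hPm, Matrix.smul_mul, Matrix.mul_smul, hGmul, smul_smul, smul_smul]
    norm_num
  -- the linear map
  set T : EuclideanSpace ℝ (Fin (2*M)) →ₗ[ℝ] EuclideanSpace ℝ (Fin (2*M)) :=
    Matrix.toEuclideanLin Pm with hT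
  have hTapp : ∀ (x : EuclideanSpace ℝ (Fin (2*M))) (i : Fin (2*M)),
      T x i = ∑ k, Pm i k * x k := by
    intro x i
    simp [hT, Matrix.toEuclideanLin_apply, Matrix.mulVec, dotProduct]
  have hTT : T ∘ₗ T = T := by
    apply LinearMap.ext
    intro x
    simp [hT, LinearMap.comp_apply, Matrix.toEuclideanLin_apply, Matrix.mulVec_mulVec, hPP]
  have hTT' : ∀ x, T (T x) = T x := fun x => by
    rw [← LinearMap.comp_apply, hTT]
  -- self-adjointness
  have hPmH : Pm.conjTranspose = Pm := by
    ext i j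
    simp [Matrix.conjTranspose_apply, hPsymm i j]
  have hadj : LinearMap.adjoint T = T := by
    rw [hT, ← Matrix.toEuclideanLin_conjTranspose_eq_adjoint, hPmH]
  have h_sa : ∀ a b : EuclideanSpace ℝ (Fin (2*M)), ⟪T a, b⟫_ℝ = ⟪a, T b⟫_ℝ := by
    intro a b
    conv_lhs => rw [← hadj]
    exact LinearMap.adjoint_inner_left T b a
  -- the range
  set V := LinearMap.range T with hV
  have hproj : LinearMap.IsProj V T := by
    refine ⟨fun x => LinearMap.mem_range_self _ x, ?_⟩
    rintro x ⟨y, rfl⟩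
    exact hTT' y
  have hfix : ∀ x ∈ V, T x = x := hproj.2
  -- trace and rank
  have htrace : LinearMap.trace ℝ _ T = (M : ℝ) := by
    rw [hT, Matrix.toEuclideanLin_eq_toLin,
      LinearMap.trace_eq_matrix_trace ℝ (PiLp.basisFun 2 ℝ (Fin (2*M))),
      LinearMap.toMatrix_toLin]
    simp [Matrix.trace, Matrix.diag, hPdiag, Finset.sum_const]
    ring
  have hfinrank : Module.finrank ℝ V = M := by
    have := hproj.trace
    rw [htrace] at this
    exact_mod_cast this.symm
  -- the isometry to ℝ^M
  let b : OrthonormalBasis (Fin M) ℝ V :=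
    (stdOrthonormalBasis ℝ V).reindex (finCongr hfinrank)
  let e : V ≃ₗᵢ[ℝ] EuclideanSpace ℝ (Fin M) := b.repr
  -- the vectors
  set b0 : OrthonormalBasis (Fin (2*M)) ℝ (EuclideanSpace ℝ (Fin (2*M))) :=
    EuclideanSpace.basisFun (Fin (2*M)) ℝ with hb0
  set v : Fin (2*M) → EuclideanSpace ℝ (Fin (2*M)) := fun n => T (b0 n) with hv
  have hvapp : ∀ n i, v n i = Pm i n := by
    intro n i
    show T (b0 n) i = Pm i n
    rw [hTapp]
    simp [hb0, EuclideanSpace.basisFun_apply, EuclideanSpace.single_apply]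
  have hvmem : ∀ n, Real.sqrt 2 • v n ∈ V :=
    fun n => Submodule.smul_mem _ _ (LinearMap.mem_range_self _ _)
  set w : Fin (2*M) → V := fun n => ⟨Real.sqrt 2 • v n, hvmem n⟩ with hw
  set φ : Fin (2*M) → EuclideanSpace ℝ (Fin M) := fun n => e (w n) with hφ
  have hwcoe : ∀ n, ((w n : V) : EuclideanSpace ℝ (Fin (2*M))) = Real.sqrt 2 • v n :=
    fun n => rfl
  -- inner products of v's
  have hinner_bv : ∀ (i : Fin (2*M)) (x : EuclideanSpace ℝ (Fin (2*M))),
      ⟪(b0 i : EuclideanSpace ℝ (Fin (2*M))), x⟫_ℝ = x i := by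
    intro i x
    rw [← b0.repr_apply_apply]
    simp [hb0]
  have hinner_vv : ∀ i j, ⟪v i, v j⟫_ℝ = Pm i j := by
    intro i j
    calc ⟪v i, v j⟫_ℝ = ⟪T (b0 i), T (b0 j)⟫_ℝ := rfl
      _ = ⟪(b0 i : EuclideanSpace ℝ (Fin (2*M))), T (T (b0 j))⟫_ℝ := h_sa _ _
      _ = ⟪(b0 i : EuclideanSpace ℝ (Fin (2*M))), v j⟫_ℝ := by rw [hTT']
      _ = v j i := hinner_bv _ _
      _ = Pm i j := by rw [hvapp, hPsymm]
  have hinner_φφ : ∀ i j, ⟪φ i, φ j⟫_ℝ = 2 * Pm i j := by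
    intro i j
    rw [hφ]
    rw [e.inner_map_map]
    rw [Submodule.coe_inner, hwcoe, hwcoe, real_inner_smul_left, real_inner_smul_right,
      hinner_vv, ← mul_assoc, Real.mul_self_sqrt (by norm_num : (0:ℝ) ≤ 2)]
  refine ⟨φ, ?_, ?_, ?_⟩
  · -- unit norm
    intro i
    have h1 : ⟪φ i, φ i⟫_ℝ = 1 := by rw [hinner_φφ, hPdiag]; norm_num
    have h2 := real_inner_self_eq_norm_sq (φ i)
    rw [h1] at h2
    nlinarith [norm_nonneg (φ i)]
  · -- equiangular
    refine ⟨s⁻¹, fun i j hij => ?_⟩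
    rw [hinner_φφ, hPoff i j hij]
    have habs : |C i j| = 1 := by rcases hoff i j hij with h | h <;> simp [h]
    rw [show (2:ℝ) * (2⁻¹ * (s⁻¹ * C i j)) = s⁻¹ * C i j by ring]
    rw [abs_mul, habs, abs_of_pos (inv_pos.mpr hs0)]
    ring
  · -- tight frame
    intro x
    set y : V := e.symm x with hy
    have hxe : x = e y := by rw [hy]; simp
    have hxφ : ∀ n, ⟪x, φ n⟫_ℝ = ⟪y, w n⟫_ℝ := by
      intro n
      rw [hxe, hφ, e.inner_map_map]
    -- expansion identity in the big space
    have hkey : ∀ z : EuclideanSpace ℝ (Fin (2*M)),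
        ∑ n, ⟪z, v n⟫_ℝ • v n = T (T z) := by
      intro z
      have h1 : ∀ n, ⟪z, v n⟫_ℝ • v n = T (⟪T z, (b0 n : EuclideanSpace ℝ (Fin (2*M)))⟫_ℝ • b0 n) := by
        intro n
        rw [map_smul]
        have hzz : ⟪z, v n⟫_ℝ = ⟪T z, (b0 n : EuclideanSpace ℝ (Fin (2*M)))⟫_ℝ :=
          (h_sa z (b0 n)).symm
        rw [hzz]
      calc ∑ n, ⟪z, v n⟫_ℝ • v n
          = ∑ n, T (⟪T z, (b0 n : EuclideanSpace ℝ (Fin (2*M)))⟫_ℝ • b0 n) :=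
            Finset.sum_congr rfl fun n _ => h1 n
        _ = T (∑ n, ⟪T z, (b0 n : EuclideanSpace ℝ (Fin (2*M)))⟫_ℝ • b0 n) := by
            rw [map_sum]
        _ = T (T z) := by
            congr 1
            calc ∑ n, ⟪T z, (b0 n : EuclideanSpace ℝ (Fin (2*M)))⟫_ℝ • b0 n
                = ∑ n, b0.repr (T z) n • b0 n := by
                  refine Finset.sum_congr rfl fun n _ => ?_
                  rw [b0.repr_apply_apply, real_inner_comm]
              _ = T z := b0.sum_repr (T z)
    have hTy : T (y : EuclideanSpace ℝ (Fin (2*M))) = (y : EuclideanSpace ℝ (Fin (2*M))) :=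
      hfix _ y.2
    have hbig : ∑ n, ⟪y, w n⟫_ℝ • w n = (2 : ℝ) • y := by
      refine Subtype.coe_injective ?_
      show ((∑ n, ⟪y, w n⟫_ℝ • w n : V) : EuclideanSpace ℝ (Fin (2*M)))
          = (((2 : ℝ) • y : V) : EuclideanSpace ℝ (Fin (2*M)))
      rw [Submodule.coe_sum, Submodule.coe_smul]
      simp only [SetLike.val_smul]
      calc ∑ n, ⟪y, w n⟫_ℝ • ((w n : V) : EuclideanSpace ℝ (Fin (2*M)))
          = ∑ n, (Real.sqrt 2 * Real.sqrt 2) •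
              (⟪(y : EuclideanSpace ℝ (Fin (2*M))), v n⟫_ℝ • v n) := by
            refine Finset.sum_congr rfl fun n _ => ?_
            rw [Submodule.coe_inner, hwcoe, real_inner_smul_right, smul_smul, smul_smul]
            ring_nf
        _ = (2 : ℝ) • ∑ n, ⟪(y : EuclideanSpace ℝ (Fin (2*M))), v n⟫_ℝ • v n := by
            rw [← Finset.smul_sum, Real.mul_self_sqrt (by norm_num : (0:ℝ) ≤ 2)]
        _ = (2 : ℝ) • (y : EuclideanSpace ℝ (Fin (2*M))) := by
            rw [hkey, hTy, hTy]
    have hMne : (M : ℝ) ≠ 0 := by positivity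
    have hratio : ((2 * M : ℕ) : ℝ) / (M : ℝ) = 2 := by
      push_cast
      field_simp
    calc ∑ n, ⟪x, φ n⟫_ℝ • φ n = ∑ n, e (⟪y, w n⟫_ℝ • w n) := by
          refine Finset.sum_congr rfl fun n _ => ?_
          rw [hxφ, hφ, e.map_smul]
      _ = e (∑ n, ⟪y, w n⟫_ℝ • w n) := by exact (map_sum e.toLinearEquiv _ _).symm
      _ = e ((2 : ℝ) • y) := by rw [hbig]
      _ = (2 : ℝ) • x := by rw [e.map_smul, hxe]
      _ = (((2 * M : ℕ) : ℝ) / (M : ℝ)) • x := by rw [hratio]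
end
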